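/- Let $b \ge 1$ and $c$ be natural numbers, and let $m = \lceil c/b \rceil$. If $m \ge 2$, then $\lfloor c/m \rfloor \ge \lfloor b/2 \rfloor$. (This is the paper's claim in CreateCompressedNodes that, since the $c$ keys and pointers are divided as evenly as possible into as few new child nodes as possible, each new child has degree at least $\lfloor b/2 \rfloor$.) -/
import Mathlib

/-- When Compress divides `c` as evenly as possible into `m = ⌈c/b⌉ ≥ 2`
new children, each new child has degree at least `⌊c/m⌋ ≥ ⌊b/2⌋`. -/
theorem compress_min_child_degree
    (b c : ℕ) (hb : 1 ≤ b) (hm : 2 ≤ (c + b - 1) / b) :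
    b / 2 ≤ c / ((c + b - 1) / b) := by
  set m := (c + b - 1) / b with hmdef
  have h1 : m * b ≤ c + b - 1 := Nat.div_mul_le_self _ _
  have h2 : 2 * (b / 2) ≤ b := by omega
  have hk : b / 2 ≤ b := Nat.div_le_self _ _
  rw [Nat.le_div_iff_mul_le (by omega)]
  have hc : m * b + 1 ≤ c + b := by omega
  nlinarith [Nat.mul_le_mul_right m hk, hm, h2]
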